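/- arXiv:1007.1365 — 6 statements merged into one kernel-verified Lean document; each statement's English description precedes it below -/
import Mathlib

section
/- Let (W,S) be a Coxeter system and S^f the set of subsets X ⊆ S with W_X finite. Define a relation ≤ on W × S^f by (u,X) ≤ (v,Y) iff X ⊆ Y, v⁻¹u ∈ W_Y, and v⁻¹u is (∅,X)-reduced. Then ≤ is a partial order on W × S^f. -/
/-- The standard parabolic subgroup `W_X` of a Coxeter group. -/
def CoxeterSystem.parabolic {B W : Type*} [Group W] {M : CoxeterMatrix B}
    (cs : CoxeterSystem M W) (X : Set B) : Subgroup W :=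
  Subgroup.closure (cs.simple '' X)

/-- `X` is a spherical subset: the parabolic subgroup `W_X` is finite. -/
def CoxeterSystem.IsSpherical {B W : Type*} [Group W] {M : CoxeterMatrix B}
    (cs : CoxeterSystem M W) (X : Set B) : Prop :=
  (cs.parabolic X : Set W).Finite

/-- The relation `(u,X) ≤ (v,Y)` iff `X ⊆ Y`, `v⁻¹u ∈ W_Y`, and `v⁻¹u` is
`(∅,X)`-reduced. -/
def CoxeterSystem.cdsLE {B W : Type*} [Group W] {M : CoxeterMatrix B}
    (cs : CoxeterSystem M W) (p q : W × Set B) : Prop :=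
  p.2 ⊆ q.2 ∧ q.1⁻¹ * p.1 ∈ cs.parabolic q.2 ∧
    ∀ u ∈ cs.parabolic p.2,
      cs.length (q.1⁻¹ * p.1) ≤ cs.length (q.1⁻¹ * p.1 * u)

/-!
Everything rests on the length additivity `ℓ (d * c) = ℓ d + ℓ c` for `c ∈ W_Y` and `d` of minimal
length in `d W_Y`: with it, if `b` is minimal in `b W_Y` and `a ∈ W_Y` is minimal in `a W_X`
(`X ⊆ Y`), then `ℓ (b * a) = ℓ b + ℓ a ≤ ℓ b + ℓ (a * c) = ℓ (b * a * c)` for `c ∈ W_X`, which is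
transitivity. Antisymmetry holds since `ℓ (v⁻¹ u) ≤ ℓ (v⁻¹ u * u⁻¹ v) = 0`.

Length additivity follows from the exchange condition, proved here through the classical action
of `W` on `W × ZMod 2` in which `s i` sends `(t, ε)` to `(s i * t * s i, ε + [t = s i])`: the
second coordinate of `w • (t, 0)` is `1` exactly when the reflection `t` satisfies
`ℓ (w * t) < ℓ w`, and it vanishes unless `t` occurs in the right inversion sequence of a word
for `w`.
-/

namespace CoxeterSystem

variable {B W : Type*} [Group W] {M : CoxeterMatrix B} (cs : CoxeterSystem M W)

local prefix:100 "s" => cs.simple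
local prefix:100 "π" => cs.wordProd
local prefix:100 "ℓ" => cs.length
local prefix:100 "ris" => cs.rightInvSeq

section InversionParity

open scoped Classical

noncomputable def simplePerm (i : B) : Equiv.Perm (W × ZMod 2) :=
  Function.Involutive.toPerm (fun x => (s i * x.1 * s i, x.2 + if x.1 = s i then 1 else 0)) <| by
    rintro ⟨t, ε⟩
    by_cases h : t = s i
    · simp [h, simple_mul_simple_self, add_assoc, CharTwo.add_self_eq_zero]
    · simp [h, mul_assoc, simple_mul_simple_cancel_left, mul_eq_one_iff_eq_inv]

theorem simplePerm_apply (i : B) (t : W) (ε : ZMod 2) :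
    cs.simplePerm i (t, ε) = (s i * t * s i, ε + if t = s i then 1 else 0) := rfl

theorem simplePerm_mul_pow_apply (i j : B) (k : ℕ) (t : W) (ε : ZMod 2) :
    ((cs.simplePerm i * cs.simplePerm j) ^ k) (t, ε) =
      ((s i * s j) ^ k * t * ((s i * s j) ^ k)⁻¹,
        ε + ∑ n ∈ Finset.range (2 * k), if t = (s j * s i) ^ n * s j then 1 else 0) := by
  induction k with
  | zero => simp
  | succ k ih =>
    have conj_eq_iff : ∀ g x y : W, g * x * g⁻¹ = y ↔ x = g⁻¹ * y * g := fun g x y => by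
      constructor <;> rintro rfl <;> group
    have inv_pow_eq : ((s i * s j) ^ k)⁻¹ = (s j * s i) ^ k := by
      rw [← inv_pow, mul_inv_rev, inv_simple, inv_simple]
    have swap : s j * (s i * s j) ^ k = (s j * s i) ^ k * s j := (mul_pow_mul _ _ k).symm
    have conj_eq_simple_j : (s i * s j) ^ k * t * ((s i * s j) ^ k)⁻¹ = s j ↔
        t = (s j * s i) ^ (2 * k) * s j := by
      rw [conj_eq_iff, inv_pow_eq, mul_assoc, swap, two_mul, pow_add, mul_assoc]
    have conj_eq_simple_i : s j * ((s i * s j) ^ k * t * ((s i * s j) ^ k)⁻¹) * s j = s i ↔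
        t = (s j * s i) ^ (2 * k + 1) * s j := by
      have conj_j : ∀ x : W, s j * x * s j = s i ↔ x = s j * s i * s j := fun x => by
        simpa only [inv_simple] using conj_eq_iff (s j) x (s i)
      rw [conj_j, conj_eq_iff, inv_pow_eq, show 2 * k + 1 = k + 1 + k by ring,
        pow_add, pow_succ]
      simp only [mul_assoc, swap]
    rw [pow_succ', Equiv.Perm.mul_apply, ih, Equiv.Perm.mul_apply, simplePerm_apply,
      simplePerm_apply, Nat.mul_succ, Finset.sum_range_succ, Finset.sum_range_succ,
      if_congr conj_eq_simple_j rfl rfl, if_congr conj_eq_simple_i rfl rfl, ← add_assoc,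
      ← add_assoc]
    congr 1
    simp only [pow_succ', mul_inv_rev, inv_simple, mul_assoc]

theorem isLiftable_simplePerm : M.IsLiftable cs.simplePerm := by
  intro i j
  ext ⟨t, ε⟩ : 1
  have periodic : ∀ n, (s j * s i) ^ (M i j + n) * s j = (s j * s i) ^ n * s j := fun n => by
    rw [pow_add, simple_mul_simple_pow', one_mul]
  -- each reflection `(s j * s i) ^ n * s j` is counted twice, once for `n` and once for `M i j + n`
  rw [simplePerm_mul_pow_apply, simple_mul_simple_pow, two_mul, Finset.sum_range_add]
  simp only [periodic, CharTwo.add_self_eq_zero]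
  simp

noncomputable def parityRep : W →* Equiv.Perm (W × ZMod 2) :=
  cs.lift ⟨cs.simplePerm, cs.isLiftable_simplePerm⟩

theorem parityRep_simple (i : B) : cs.parityRep (s i) = cs.simplePerm i :=
  cs.lift_apply_simple cs.isLiftable_simplePerm i

/-- The parity of the number of occurrences of `t` in the right inversion sequence of any word
for `w`. -/
noncomputable def inversionParity (w t : W) : ZMod 2 := (cs.parityRep w (t, 0)).2

theorem parityRep_apply (w t : W) (ε : ZMod 2) :
    cs.parityRep w (t, ε) = (w * t * w⁻¹, ε + cs.inversionParity w t) := by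
  induction w using cs.simple_induction_left generalizing t ε with
  | one => simp [inversionParity]
  | mul_simple_left w i ih =>
    have step : ∀ ε, cs.parityRep (s i * w) (t, ε) = (s i * w * t * (s i * w)⁻¹,
        ε + (cs.inversionParity w t + if w * t * w⁻¹ = s i then 1 else 0)) := fun ε => by
      rw [map_mul, Equiv.Perm.mul_apply, ih, parityRep_simple, simplePerm_apply]
      simp only [mul_inv_rev, inv_simple, mul_assoc, add_assoc]
    rw [step, inversionParity.eq_def _ (s i * w), step, zero_add]

theorem inversionParity_mul (x y t : W) :
    cs.inversionParity (x * y) t = cs.inversionParity y t + cs.inversionParity x (y * t * y⁻¹) := by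
  rw [inversionParity, map_mul, Equiv.Perm.mul_apply, parityRep_apply, parityRep_apply, zero_add]

theorem inversionParity_one (t : W) : cs.inversionParity 1 t = 0 := by
  simp [inversionParity]

theorem inversionParity_simple (i : B) (t : W) :
    cs.inversionParity (s i) t = if t = s i then 1 else 0 := by
  rw [inversionParity, parityRep_simple, simplePerm_apply, zero_add]

theorem inversionParity_self {t : W} (ht : cs.IsReflection t) : cs.inversionParity t t = 1 := by
  obtain ⟨x, i, rfl⟩ := ht
  have conj_self : x⁻¹ * (x * s i * x⁻¹) * x⁻¹⁻¹ = s i := by group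
  have inv_parity : cs.inversionParity x⁻¹ (x * s i * x⁻¹) + cs.inversionParity x (s i) = 0 := by
    have := cs.inversionParity_mul x x⁻¹ (x * s i * x⁻¹)
    rwa [mul_inv_cancel, inversionParity_one, conj_self, eq_comm] at this
  rw [inversionParity_mul, conj_self, inversionParity_mul, inversionParity_simple, if_pos rfl,
    simple_mul_simple_self, one_mul, inv_simple]
  linear_combination inv_parity

theorem inversionParity_wordProd_eq_zero {ω : List B} {t : W} (h : t ∉ ris ω) :
    cs.inversionParity (π ω) t = 0 := by
  induction ω with
  | nil => exact cs.inversionParity_one t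
  | cons i ω ih =>
    simp only [rightInvSeq, List.mem_cons, not_or] at h
    have hne : π ω * t * (π ω)⁻¹ ≠ s i := fun h' => h.1 (by rw [← h']; group)
    rw [wordProd_cons, inversionParity_mul, ih h.2, inversionParity_simple, if_neg hne, add_zero]

theorem length_mul_lt_of_inversionParity_eq_one {w t : W} (h : cs.inversionParity w t = 1) :
    ℓ (w * t) < ℓ w := by
  obtain ⟨ω, hω, rfl⟩ := cs.exists_isReduced w
  have hmem : t ∈ ris ω := by
    by_contra hnot
    rw [inversionParity_wordProd_eq_zero cs hnot] at h
    exact zero_ne_one h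
  exact (cs.isRightInversion_of_mem_rightInvSeq hω hmem).2

theorem inversionParity_eq_one_of_length_mul_lt {w t : W} (ht : cs.IsReflection t)
    (hlt : ℓ (w * t) < ℓ w) : cs.inversionParity w t = 1 := by
  by_contra hne
  have h0 : cs.inversionParity w t = 0 := (by decide : ∀ a : ZMod 2, a ≠ 1 → a = 0) _ hne
  have h1 : cs.inversionParity (w * t) t = 1 := by
    rw [inversionParity_mul, inversionParity_self cs ht, ht.mul_self, one_mul, ht.inv, h0, add_zero]
  have := cs.length_mul_lt_of_inversionParity_eq_one h1
  rw [mul_assoc, ht.mul_self, mul_one] at this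
  omega

end InversionParity

theorem mem_rightInvSeq_of_length_mul_lt {ω : List B} {t : W} (ht : cs.IsReflection t)
    (hlt : ℓ (π ω * t) < ℓ (π ω)) : t ∈ ris ω := by
  by_contra h
  have := cs.inversionParity_wordProd_eq_zero h
  rw [cs.inversionParity_eq_one_of_length_mul_lt ht hlt] at this
  exact one_ne_zero this

theorem exists_wordProd_mul_simple_eq_eraseIdx {ω : List B} {i : B}
    (hlt : ℓ (π ω * s i) < ℓ (π ω)) : ∃ j < ω.length, π ω * s i = π (ω.eraseIdx j) := by
  obtain ⟨j, hj, hget⟩ :=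
    List.mem_iff_getElem.mp (cs.mem_rightInvSeq_of_length_mul_lt (cs.isReflection_simple i) hlt)
  refine ⟨j, by simpa using hj, ?_⟩
  rw [← wordProd_mul_getD_rightInvSeq, List.getD_eq_getElem _ _ hj, hget]

theorem simple_mem_parabolic {Y : Set B} {i : B} (hi : i ∈ Y) : s i ∈ cs.parabolic Y :=
  Subgroup.subset_closure ⟨i, hi, rfl⟩

theorem parabolic_mono {X Y : Set B} (h : X ⊆ Y) : cs.parabolic X ≤ cs.parabolic Y :=
  Subgroup.closure_mono (Set.image_mono h)

theorem wordProd_mem_parabolic {Y : Set B} {ω : List B} (hY : ∀ i ∈ ω, i ∈ Y) :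
    π ω ∈ cs.parabolic Y :=
  Subgroup.list_prod_mem _ <| List.forall_mem_map.mpr fun i hi => cs.simple_mem_parabolic (hY i hi)

theorem exists_isReduced_subset_append_eq_mul_simple {ω : List B} (hω : cs.IsReduced ω) (i : B) :
    ∃ ω', cs.IsReduced ω' ∧ ω' ⊆ ω ++ [i] ∧ π ω' = π ω * s i := by
  rcases cs.length_mul_simple (π ω) i with hup | hdown
  · refine ⟨ω ++ [i], ?_, List.Subset.refl _, by rw [wordProd_append, wordProd_singleton]⟩
    rw [IsReduced, wordProd_append, wordProd_singleton, hup, hω.eq, List.length_append,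
      List.length_singleton]
  · obtain ⟨j, hj, heq⟩ :=
      cs.exists_wordProd_mul_simple_eq_eraseIdx (by omega : ℓ (π ω * s i) < ℓ (π ω))
    refine ⟨ω.eraseIdx j, ?_,
      List.Subset.trans List.eraseIdx_subset (List.subset_append_left _ _), heq.symm⟩
    rw [IsReduced, ← heq, List.length_eraseIdx_of_lt hj, ← hω.eq]
    omega

theorem exists_isReduced_of_mem_parabolic {Y : Set B} {c : W} (hc : c ∈ cs.parabolic Y) :
    ∃ ω, cs.IsReduced ω ∧ (∀ i ∈ ω, i ∈ Y) ∧ π ω = c := by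
  have step : ∀ x, ∀ i ∈ Y, (∃ ω, cs.IsReduced ω ∧ (∀ i ∈ ω, i ∈ Y) ∧ π ω = x) →
      ∃ ω, cs.IsReduced ω ∧ (∀ i ∈ ω, i ∈ Y) ∧ π ω = x * s i := by
    rintro x i hi ⟨ω, hω, hY, rfl⟩
    obtain ⟨ω', hω', hsub, hprod⟩ := cs.exists_isReduced_subset_append_eq_mul_simple hω i
    refine ⟨ω', hω', fun b hb => ?_, hprod⟩
    rcases List.mem_append.mp (hsub hb) with hb | hb
    · exact hY b hb
    · rwa [List.mem_singleton.mp hb]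
  induction hc using Subgroup.closure_induction_right with
  | one => exact ⟨[], by simp [IsReduced], by simp, rfl⟩
  | mul_right x _ y hy ih =>
    obtain ⟨i, hi, rfl⟩ := hy
    exact step x i hi ih
  | mul_inv_cancel x _ y hy ih =>
    obtain ⟨i, hi, rfl⟩ := hy
    rw [inv_simple]
    exact step x i hi ih

/-- The paper's `(∅, Y)`-reduced elements; the last clause of `cdsLE p q` is
`IsMinimalInCoset p.2 (q.1⁻¹ * p.1)`. -/
def IsMinimalInCoset (Y : Set B) (d : W) : Prop :=
  ∀ c ∈ cs.parabolic Y, ℓ d ≤ ℓ (d * c)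

variable {cs}

theorem IsMinimalInCoset.length_mul_wordProd {Y : Set B} {d : W} (hd : cs.IsMinimalInCoset Y d)
    {ω : List B} (hω : cs.IsReduced ω) (hY : ∀ i ∈ ω, i ∈ Y) :
    ℓ (d * π ω) = ℓ d + ω.length := by
  induction ω using List.reverseRecOn with
  | nil => simp
  | append_singleton ω i ih =>
    have hω' : cs.IsReduced ω := by simpa using hω.take ω.length
    have hωY : ∀ b ∈ ω, b ∈ Y := fun b hb => hY b (List.mem_append_left _ hb)
    have ih := ih hω' hωY
    rw [wordProd_append, wordProd_singleton, ← mul_assoc, List.length_append,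
      List.length_singleton]
    rcases cs.length_mul_simple (d * π ω) i with hup | hdown
    · omega
    exfalso
    obtain ⟨ωd, hωd, rfl⟩ := cs.exists_isReduced d
    obtain ⟨j, hj, heq⟩ := cs.exists_wordProd_mul_simple_eq_eraseIdx (ω := ωd ++ ω) (i := i)
      (by rw [wordProd_append]; omega)
    -- Exchange deletes a letter of `ωd ++ ω`: deleting it from `ωd` would shorten `d` inside
    -- `d W_Y`, deleting it from `ω` would contradict the reducedness of `ω ++ [i]`.
    rcases lt_or_ge j ωd.length with hjd | hjd
    · rw [List.eraseIdx_append_of_lt_length hjd, wordProd_append, wordProd_append] at heq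
      have hmem : π ω * s i * (π ω)⁻¹ ∈ cs.parabolic Y := by
        have hωi := cs.wordProd_mem_parabolic hY
        rw [wordProd_append, wordProd_singleton] at hωi
        exact mul_mem hωi (inv_mem (cs.wordProd_mem_parabolic hωY))
      have hle := hd _ hmem
      rw [← mul_assoc, ← mul_assoc, heq, mul_inv_cancel_right] at hle
      have := cs.length_wordProd_le (ωd.eraseIdx j)
      rw [List.length_eraseIdx_of_lt hjd] at this
      rw [hωd.eq] at hle
      omega
    · rw [List.eraseIdx_append_of_length_le hjd, wordProd_append, wordProd_append,
        mul_assoc] at heq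
      have hred := hω.eq
      rw [wordProd_append, wordProd_singleton, mul_left_cancel heq, List.length_append,
        List.length_singleton] at hred
      have := cs.length_wordProd_le (ω.eraseIdx (j - ωd.length))
      rw [List.length_eraseIdx] at this
      split_ifs at this <;> omega

theorem IsMinimalInCoset.length_mul {Y : Set B} {d c : W} (hd : cs.IsMinimalInCoset Y d)
    (hc : c ∈ cs.parabolic Y) : ℓ (d * c) = ℓ d + ℓ c := by
  obtain ⟨ω, hω, hY, rfl⟩ := cs.exists_isReduced_of_mem_parabolic hc
  rw [hd.length_mul_wordProd hω hY, hω.eq]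

theorem IsMinimalInCoset.mul {X Y : Set B} {a b : W} (hb : cs.IsMinimalInCoset Y b)
    (ha : cs.IsMinimalInCoset X a) (hXY : X ⊆ Y) (haY : a ∈ cs.parabolic Y) :
    cs.IsMinimalInCoset X (b * a) := fun c hc => by
  rw [mul_assoc, hb.length_mul haY,
    hb.length_mul (mul_mem haY (cs.parabolic_mono hXY hc))]
  exact Nat.add_le_add_left (ha c hc) _

theorem cdsLE_refl (p : W × Set B) : cs.cdsLE p p :=
  ⟨subset_rfl, by simp, fun c _ => by simp⟩

theorem cdsLE_antisymm {p q : W × Set B} (hpq : cs.cdsLE p q) (hqp : cs.cdsLE q p) : p = q := by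
  have hX : p.2 = q.2 := subset_antisymm hpq.1 hqp.1
  have hmem : q.1⁻¹ * p.1 ∈ cs.parabolic p.2 := hX ▸ hpq.2.1
  have hle := hpq.2.2 _ (inv_mem hmem)
  rw [mul_inv_cancel, length_one, Nat.le_zero, length_eq_zero_iff, inv_mul_eq_one] at hle
  exact Prod.ext hle.symm hX

theorem cdsLE_trans {p q r : W × Set B} (hpq : cs.cdsLE p q) (hqr : cs.cdsLE q r) :
    cs.cdsLE p r := by
  have hfactor : r.1⁻¹ * p.1 = (r.1⁻¹ * q.1) * (q.1⁻¹ * p.1) := by group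
  refine ⟨hpq.1.trans hqr.1, ?_, ?_⟩
  · rw [hfactor]
    exact mul_mem hqr.2.1 (cs.parabolic_mono hqr.1 hpq.2.1)
  · rw [hfactor]
    exact IsMinimalInCoset.mul hqr.2.2 hpq.2.2 hpq.1 hpq.2.1

end CoxeterSystem

/-- The relation `≤` is a partial order on `W × S^f`. -/
theorem cdsLE_partialOrder {B W : Type*} [Group W] {M : CoxeterMatrix B}
    (cs : CoxeterSystem M W) :
    (∀ p : W × Set B, cs.IsSpherical p.2 → cs.cdsLE p p) ∧
    (∀ p q : W × Set B, cs.IsSpherical p.2 → cs.IsSpherical q.2 →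
      cs.cdsLE p q → cs.cdsLE q p → p = q) ∧
    (∀ p q r : W × Set B, cs.IsSpherical p.2 → cs.IsSpherical q.2 →
      cs.IsSpherical r.2 → cs.cdsLE p q → cs.cdsLE q r → cs.cdsLE p r) :=
  ⟨fun p _ => cs.cdsLE_refl p, fun _ _ _ _ => cs.cdsLE_antisymm,
    fun _ _ _ _ _ _ => cs.cdsLE_trans⟩
end

section
/- Let A be a group, and for each X in a family S of subsets of a set S closed under intersection let A_X be a subgroup with A_X ∩ A_Y = A_{X∩Y}. Let CA be a normal subgroup of A, let CA_X = CA ∩ A_X be the colored subgroups, and suppose there are retractions π_X : CA → CA_X satisfying π_X ∘ (inclusion of CA_Y) = π_{X∩Y} on CA_Y, with π_X restricted to CA_X the identity. Then for X, Y ⊆ S and α ∈ CA: if CA_X ∩ αCA_Y ≠ ∅, then π_X(α) ∈ CA_X ∩ αCA_Y. -/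
open Pointwise

/-- Lemma 4.6 of Godelle–Paris: Let `A` be a group with subgroups `A_X` indexed
by subsets `X` of `S` satisfying `A_X ∩ A_Y = A_{X∩Y}`, a normal subgroup `CA`,
colored subgroups `CA_X = CA ∩ A_X`, and retractions `π_X : CA → CA_X` which
are multiplicative, restrict to the identity on `CA_X`, and satisfy
`π_X = π_{X∩Y}` on `CA_Y`. If `CA_X ∩ α CA_Y ≠ ∅` for `α ∈ CA`, then
`π_X(α) ∈ CA_X ∩ α CA_Y`. -/
theorem retraction_mem_inter {A : Type*} [Group A] {S : Type*}
    (Asub : Set S → Subgroup A) (CA : Subgroup A) (hCA : CA.Normal)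
    (hinter : ∀ X Y : Set S, Asub X ⊓ Asub Y = Asub (X ∩ Y))
    (π : Set S → A → A)
    (hmul : ∀ X : Set S, ∀ a ∈ CA, ∀ b ∈ CA, π X (a * b) = π X a * π X b)
    (hmem : ∀ X : Set S, ∀ a ∈ CA,
      π X a ∈ (CA : Set A) ∩ (Asub X : Set A))
    (hid : ∀ X : Set S, ∀ a ∈ (CA : Set A) ∩ (Asub X : Set A), π X a = a)
    (hcomp : ∀ X Y : Set S, ∀ a ∈ (CA : Set A) ∩ (Asub Y : Set A),
      π X a = π (X ∩ Y) a)
    (X Y : Set S) (α : A) (hα : α ∈ CA)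
    (hne : (((CA : Set A) ∩ (Asub X : Set A)) ∩
      α • ((CA : Set A) ∩ (Asub Y : Set A))).Nonempty) :
    π X α ∈ ((CA : Set A) ∩ (Asub X : Set A)) ∩
      α • ((CA : Set A) ∩ (Asub Y : Set A)) := by
  obtain ⟨β, hβX, hβ⟩ := hne
  obtain ⟨γ, hγY, hβγ⟩ := hβ
  have hγCA : γ ∈ CA := hγY.1
  have hγA : γ ∈ (Asub Y : Set A) := hγY.2
  -- π X γ ∈ CA ∩ A_{X∩Y} ⊆ CA ∩ A_Y
  have hπγ : π X γ = π (X ∩ Y) γ := hcomp X Y γ hγY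
  have hπγmem : π X γ ∈ (CA : Set A) ∩ (Asub Y : Set A) := by
    have h1 := hmem (X ∩ Y) γ hγCA
    rw [hπγ]
    refine ⟨h1.1, ?_⟩
    have : Asub (X ∩ Y) ≤ Asub Y := by
      rw [← hinter]; exact inf_le_right
    exact this h1.2
  -- β = α * γ, π X β = β
  have hβeq : β = α * γ := hβγ.symm
  have hβCA : β ∈ CA := hβX.1
  have hπβ : π X β = β := hid X β hβX
  have key : β = π X α * π X γ := by
    rw [← hπβ, hβeq, hmul X α hα γ hγCA]
  have hπαeq : π X α = α * (γ * (π X γ)⁻¹) := by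
    have : π X α = β * (π X γ)⁻¹ := by
      rw [key]; group
    rw [this, hβeq]; group
  constructor
  · exact hmem X α hα
  · refine ⟨γ * (π X γ)⁻¹, ⟨?_, ?_⟩, hπαeq.symm⟩
    · exact mul_mem hγCA (inv_mem hπγmem.1)
    · exact mul_mem hγA (inv_mem hπγmem.2)
end

section
/- With the retractions π_X : CA → CA_X as above, for β_1,β_2,β_3 ∈ CA and subsets X_1,X_2,X_3 of S: if β_i CA_{X_i} ∩ β_j CA_{X_j} ≠ ∅ for all i,j, then β_1 CA_{X_1} ∩ β_2 CA_{X_2} ∩ β_3 CA_{X_3} ≠ ∅. -/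
open Pointwise

/-- Lemma 4.7 of Godelle–Paris (colored version): with the retractions
`π_X : CA → CA_X` as in Lemma 4.6, if the cosets `β_i CA_{X_i}` (for
`β_i ∈ CA`, `i = 1,2,3`) pairwise intersect, then they have a common point. -/
theorem triple_coset_inter_nonempty {A : Type*} [Group A] {S : Type*}
    (Asub : Set S → Subgroup A) (CA : Subgroup A) (hCA : CA.Normal)
    (hinter : ∀ X Y : Set S, Asub X ⊓ Asub Y = Asub (X ∩ Y))
    (π : Set S → A → A)
    (hmul : ∀ X : Set S, ∀ a ∈ CA, ∀ b ∈ CA, π X (a * b) = π X a * π X b)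
    (hmem : ∀ X : Set S, ∀ a ∈ CA,
      π X a ∈ (CA : Set A) ∩ (Asub X : Set A))
    (hid : ∀ X : Set S, ∀ a ∈ (CA : Set A) ∩ (Asub X : Set A), π X a = a)
    (hcomp : ∀ X Y : Set S, ∀ a ∈ (CA : Set A) ∩ (Asub Y : Set A),
      π X a = π (X ∩ Y) a)
    (β : Fin 3 → A) (Xs : Fin 3 → Set S) (hβ : ∀ i, β i ∈ CA)
    (hpair : ∀ i j : Fin 3,
      ((β i • ((CA : Set A) ∩ (Asub (Xs i) : Set A))) ∩
        (β j • ((CA : Set A) ∩ (Asub (Xs j) : Set A)))).Nonempty) :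
    (⋂ i : Fin 3, β i • ((CA : Set A) ∩ (Asub (Xs i) : Set A))).Nonempty := by
  classical
  -- Key step: if `CA_X ∩ α CA_Y ≠ ∅` (for `α ∈ CA`) then `π_X α` lies in it.
  have key : ∀ (X Y : Set S) (α : A), α ∈ CA →
      (∃ c, c ∈ (CA : Set A) ∩ (Asub X : Set A) ∧
        α⁻¹ * c ∈ (CA : Set A) ∩ (Asub Y : Set A)) →
      π X α ∈ (CA : Set A) ∩ (Asub X : Set A) ∧
      α⁻¹ * π X α ∈ (CA : Set A) ∩ (Asub Y : Set A) := by
    rintro X Y α hα ⟨c, hc, hγ⟩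
    have hγCA : α⁻¹ * c ∈ CA := hγ.1
    have h1 : π X c = c := hid X c hc
    have h2 : π X c = π X α * π X (α⁻¹ * c) := by
      have hc' : c = α * (α⁻¹ * c) := by group
      calc π X c = π X (α * (α⁻¹ * c)) := by rw [← hc']
        _ = π X α * π X (α⁻¹ * c) := hmul X α hα _ hγCA
    have h3 : π X (α⁻¹ * c) = π (X ∩ Y) (α⁻¹ * c) := hcomp X Y _ hγ
    have h4 : π (X ∩ Y) (α⁻¹ * c) ∈ (CA : Set A) ∩ (Asub (X ∩ Y) : Set A) :=
      hmem _ _ hγCA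
    have hsub : ∀ a : A, a ∈ Asub (X ∩ Y) → a ∈ Asub Y := fun a ha =>
      ((hinter X Y).symm.trans_le inf_le_right) ha
    have hp : π X (α⁻¹ * c) ∈ (CA : Set A) ∩ (Asub Y : Set A) := by
      rw [h3]; exact ⟨h4.1, hsub _ h4.2⟩
    have h5 : π X α * π X (α⁻¹ * c) = c := by rw [← h2, h1]
    have hπα : π X α = c * (π X (α⁻¹ * c))⁻¹ := eq_mul_inv_of_mul_eq h5
    refine ⟨hmem X α hα, ?_⟩
    have heq : α⁻¹ * π X α = (α⁻¹ * c) * (π X (α⁻¹ * c))⁻¹ := by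
      rw [hπα]; group
    rw [heq]
    exact ⟨CA.mul_mem hγ.1 (CA.inv_mem hp.1),
      (Asub Y).mul_mem hγ.2 ((Asub Y).inv_mem hp.2)⟩
  -- pairwise intersection points
  obtain ⟨d, hd1, hd2⟩ := hpair 1 2
  obtain ⟨e, he0, he1⟩ := hpair 0 1
  obtain ⟨f, hf0, hf2⟩ := hpair 0 2
  rw [Set.mem_smul_set_iff_inv_smul_mem, smul_eq_mul] at hd1 hd2 he0 he1 hf0 hf2
  have hdCA : d ∈ CA := by
    have := CA.mul_mem (hβ 1) hd1.1
    simpa using this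
  have hδ : (β 0)⁻¹ * d ∈ CA := CA.mul_mem (CA.inv_mem (hβ 0)) hdCA
  -- first application of key step : `Y = Xs 1`
  have k1 : π (Xs 0) ((β 0)⁻¹ * d) ∈ (CA : Set A) ∩ (Asub (Xs 0) : Set A) ∧
      ((β 0)⁻¹ * d)⁻¹ * π (Xs 0) ((β 0)⁻¹ * d) ∈
        (CA : Set A) ∩ (Asub (Xs 1) : Set A) := by
    refine key (Xs 0) (Xs 1) _ hδ ⟨(β 0)⁻¹ * e, he0, ?_⟩
    have hmemb : ((β 1)⁻¹ * d)⁻¹ * ((β 1)⁻¹ * e) ∈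
        (CA : Set A) ∩ (Asub (Xs 1) : Set A) :=
      ⟨CA.mul_mem (CA.inv_mem hd1.1) he1.1,
        (Asub (Xs 1)).mul_mem ((Asub (Xs 1)).inv_mem hd1.2) he1.2⟩
    have heq : ((β 0)⁻¹ * d)⁻¹ * ((β 0)⁻¹ * e)
        = ((β 1)⁻¹ * d)⁻¹ * ((β 1)⁻¹ * e) := by group
    rw [heq]; exact hmemb
  -- second application of key step : `Y = Xs 2`
  have k2 : π (Xs 0) ((β 0)⁻¹ * d) ∈ (CA : Set A) ∩ (Asub (Xs 0) : Set A) ∧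
      ((β 0)⁻¹ * d)⁻¹ * π (Xs 0) ((β 0)⁻¹ * d) ∈
        (CA : Set A) ∩ (Asub (Xs 2) : Set A) := by
    refine key (Xs 0) (Xs 2) _ hδ ⟨(β 0)⁻¹ * f, hf0, ?_⟩
    have hmemb : ((β 2)⁻¹ * d)⁻¹ * ((β 2)⁻¹ * f) ∈
        (CA : Set A) ∩ (Asub (Xs 2) : Set A) :=
      ⟨CA.mul_mem (CA.inv_mem hd2.1) hf2.1,
        (Asub (Xs 2)).mul_mem ((Asub (Xs 2)).inv_mem hd2.2) hf2.2⟩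
    have heq : ((β 0)⁻¹ * d)⁻¹ * ((β 0)⁻¹ * f)
        = ((β 2)⁻¹ * d)⁻¹ * ((β 2)⁻¹ * f) := by group
    rw [heq]; exact hmemb
  set g := π (Xs 0) ((β 0)⁻¹ * d) with hg
  refine ⟨β 0 * g, Set.mem_iInter.2 ?_⟩
  intro i
  rw [Set.mem_smul_set_iff_inv_smul_mem, smul_eq_mul]
  fin_cases i
  · simpa using k1.1
  · show (β 1)⁻¹ * (β 0 * g) ∈ (CA : Set A) ∩ (Asub (Xs 1) : Set A)
    have hm : ((β 1)⁻¹ * d) * (((β 0)⁻¹ * d)⁻¹ * g) ∈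
        (CA : Set A) ∩ (Asub (Xs 1) : Set A) :=
      ⟨CA.mul_mem hd1.1 k1.2.1, (Asub (Xs 1)).mul_mem hd1.2 k1.2.2⟩
    have heq : (β 1)⁻¹ * (β 0 * g) = ((β 1)⁻¹ * d) * (((β 0)⁻¹ * d)⁻¹ * g) := by
      group
    rw [heq]; exact hm
  · show (β 2)⁻¹ * (β 0 * g) ∈ (CA : Set A) ∩ (Asub (Xs 2) : Set A)
    have hm : ((β 2)⁻¹ * d) * (((β 0)⁻¹ * d)⁻¹ * g) ∈
        (CA : Set A) ∩ (Asub (Xs 2) : Set A) :=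
      ⟨CA.mul_mem hd2.1 k2.2.1, (Asub (Xs 2)).mul_mem hd2.2 k2.2.2⟩
    have heq : (β 2)⁻¹ * (β 0 * g) = ((β 2)⁻¹ * d) * (((β 0)⁻¹ * d)⁻¹ * g) := by
      group
    rw [heq]; exact hm
end

section
/- Let A be a group with subgroups A_X indexed by subsets X of S, satisfying A_X ∩ A_Y = A_{X∩Y} and X ⊆ Y ⟹ A_X ⊆ A_Y. For cubes C_i = C(α_i A_{R_i}, α_i A_{T_i}) (i = 1,2) in the Charney–Davis–Deligne complex: C_1 ∩ C_2 ≠ ∅ if and only if R_1 ∪ R_2 ⊆ T_1 ∩ T_2 and α_1⁻¹α_2 ∈ A_{T_1∩T_2}. In that case C_1 ∩ C_2 = C(α_1 A_R, α_1 A_{T_1∩T_2}), where R is the smallest subset with R_1 ∪ R_2 ⊆ R ⊆ T_1 ∩ T_2 and α_1⁻¹α_2 ∈ A_R. -/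
open Pointwise

/-- The cube `C(αA_R, αA_T)` of the Charney–Davis–Deligne complex, encoded by
its set of vertices `x(βA_U)`: pairs `(U, c)` with `R ⊆ U ⊆ T` and
`c = αA_U`. -/
def cdCube {A : Type*} [Group A] {S : Type*} (Asub : Set S → Subgroup A)
    (α : A) (R T : Set S) : Set (Set S × Set A) :=
  {v | R ⊆ v.1 ∧ v.1 ⊆ T ∧ v.2 = α • (Asub v.1 : Set A)}

/-- Lemma 5.2(1) of Godelle–Paris: two cubes `C_i = C(α_i A_{R_i}, α_i A_{T_i})`
intersect iff `R_1 ∪ R_2 ⊆ T_1 ∩ T_2` and `α_1⁻¹α_2 ∈ A_{T_1∩T_2}`; in that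
case `C_1 ∩ C_2 = C(α_1 A_R, α_1 A_{T_1∩T_2})` where `R` is the smallest subset
with `R_1 ∪ R_2 ⊆ R ⊆ T_1 ∩ T_2` and `α_1⁻¹α_2 ∈ A_R`. -/
theorem cdCube_inter {A : Type*} [Group A] {S : Type*}
    (Asub : Set S → Subgroup A)
    (hmono : ∀ X Y : Set S, X ⊆ Y → Asub X ≤ Asub Y)
    (hinter : ∀ X Y : Set S, Asub X ⊓ Asub Y = Asub (X ∩ Y))
    (Sfin : Set (Set S))
    (hlower : ∀ X Y : Set S, X ⊆ Y → Y ∈ Sfin → X ∈ Sfin)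
    (α₁ α₂ : A) (R₁ T₁ R₂ T₂ : Set S)
    (h₁ : R₁ ⊆ T₁) (h₂ : R₂ ⊆ T₂) (hT₁ : T₁ ∈ Sfin) (hT₂ : T₂ ∈ Sfin) :
    ((cdCube Asub α₁ R₁ T₁ ∩ cdCube Asub α₂ R₂ T₂).Nonempty ↔
      R₁ ∪ R₂ ⊆ T₁ ∩ T₂ ∧ α₁⁻¹ * α₂ ∈ Asub (T₁ ∩ T₂)) ∧
    (∀ R : Set S, R₁ ∪ R₂ ⊆ R → R ⊆ T₁ ∩ T₂ → α₁⁻¹ * α₂ ∈ Asub R →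
      (∀ R' : Set S, R₁ ∪ R₂ ⊆ R' → R' ⊆ T₁ ∩ T₂ → α₁⁻¹ * α₂ ∈ Asub R' →
        R ⊆ R') →
      cdCube Asub α₁ R₁ T₁ ∩ cdCube Asub α₂ R₂ T₂ =
        cdCube Asub α₁ R (T₁ ∩ T₂)) := by
  constructor
  · constructor
    · rintro ⟨⟨U, c⟩, ⟨hR₁U, hUT₁, hc₁⟩, ⟨hR₂U, hUT₂, hc₂⟩⟩
      have hmem : α₁⁻¹ * α₂ ∈ Asub U := by
        rw [← leftCoset_eq_iff]
        exact hc₁.symm.trans hc₂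
      refine ⟨Set.union_subset (hR₁U.trans (Set.subset_inter hUT₁ hUT₂))
        (hR₂U.trans (Set.subset_inter hUT₁ hUT₂)),
        hmono U (T₁ ∩ T₂) (Set.subset_inter hUT₁ hUT₂) hmem⟩
    · rintro ⟨hsub, hmem⟩
      refine ⟨(T₁ ∩ T₂, α₁ • (Asub (T₁ ∩ T₂) : Set A)),
        ⟨(Set.union_subset_iff.mp hsub).1, Set.inter_subset_left, rfl⟩,
        ⟨(Set.union_subset_iff.mp hsub).2, Set.inter_subset_right, ?_⟩⟩
      show α₁ • (Asub (T₁ ∩ T₂) : Set A) = α₂ • (Asub (T₁ ∩ T₂) : Set A)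
      exact (leftCoset_eq_iff _).mpr hmem
  · intro R hRlo hRhi hRmem hRmin
    ext ⟨U, c⟩
    constructor
    · rintro ⟨⟨hR₁U, hUT₁, hc₁⟩, ⟨hR₂U, hUT₂, hc₂⟩⟩
      have hmem : α₁⁻¹ * α₂ ∈ Asub U := by
        rw [← leftCoset_eq_iff]
        exact hc₁.symm.trans hc₂
      exact ⟨hRmin U (Set.union_subset hR₁U hR₂U)
        (Set.subset_inter hUT₁ hUT₂) hmem, Set.subset_inter hUT₁ hUT₂, hc₁⟩
    · rintro ⟨hRU, hUT, hc⟩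
      have hlo : R₁ ∪ R₂ ⊆ U := hRlo.trans hRU
      have hmem : α₁⁻¹ * α₂ ∈ Asub U := hmono R U hRU hRmem
      refine ⟨⟨(Set.union_subset_iff.mp hlo).1, hUT.trans Set.inter_subset_left, hc⟩,
        ⟨(Set.union_subset_iff.mp hlo).2, hUT.trans Set.inter_subset_right, ?_⟩⟩
      rw [hc]
      exact (leftCoset_eq_iff _).mpr hmem
end

section
/- With the setup above, the cubes C_1 = C(α_1 A_{R_1}, α_1 A_{T_1}) and C_2 = C(α_2 A_{R_2}, α_2 A_{T_2}) span a cube (are both contained in some cube of Φ) if and only if α_1 A_{R_1} ∩ α_2 A_{R_2} ≠ ∅ and T_1 ∪ T_2 ∈ S_{<∞}. In that case the smallest cube containing both is C(αA_{R_1∩R_2}, αA_{T_1∪T_2}), where α is any element of α_1 A_{R_1} ∩ α_2 A_{R_2}. -/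
open Pointwise

/-- Lemma 5.2(2) of Godelle–Paris: the cubes `C_1` and `C_2` span a cube (are
both contained in some cube of `Φ`) iff `α_1 A_{R_1} ∩ α_2 A_{R_2} ≠ ∅` and
`T_1 ∪ T_2 ∈ S_{<∞}`; in that case the smallest cube containing both is
`C(αA_{R_1∩R_2}, αA_{T_1∪T_2})` for any `α ∈ α_1 A_{R_1} ∩ α_2 A_{R_2}`. -/
theorem cdCube_span {A : Type*} [Group A] {S : Type*}
    (Asub : Set S → Subgroup A)
    (hmono : ∀ X Y : Set S, X ⊆ Y → Asub X ≤ Asub Y)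
    (hinter : ∀ X Y : Set S, Asub X ⊓ Asub Y = Asub (X ∩ Y))
    (Sfin : Set (Set S))
    (hlower : ∀ X Y : Set S, X ⊆ Y → Y ∈ Sfin → X ∈ Sfin)
    (α₁ α₂ : A) (R₁ T₁ R₂ T₂ : Set S)
    (h₁ : R₁ ⊆ T₁) (h₂ : R₂ ⊆ T₂) (hT₁ : T₁ ∈ Sfin) (hT₂ : T₂ ∈ Sfin) :
    ((∃ (β : A) (P Q : Set S), P ⊆ Q ∧ Q ∈ Sfin ∧
        cdCube Asub α₁ R₁ T₁ ⊆ cdCube Asub β P Q ∧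
        cdCube Asub α₂ R₂ T₂ ⊆ cdCube Asub β P Q) ↔
      ((α₁ • (Asub R₁ : Set A)) ∩ (α₂ • (Asub R₂ : Set A))).Nonempty ∧
        T₁ ∪ T₂ ∈ Sfin) ∧
    (∀ α ∈ (α₁ • (Asub R₁ : Set A)) ∩ (α₂ • (Asub R₂ : Set A)),
      T₁ ∪ T₂ ∈ Sfin →
      cdCube Asub α₁ R₁ T₁ ⊆ cdCube Asub α (R₁ ∩ R₂) (T₁ ∪ T₂) ∧
      cdCube Asub α₂ R₂ T₂ ⊆ cdCube Asub α (R₁ ∩ R₂) (T₁ ∪ T₂) ∧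
      ∀ (β : A) (P Q : Set S), P ⊆ Q → Q ∈ Sfin →
        cdCube Asub α₁ R₁ T₁ ⊆ cdCube Asub β P Q →
        cdCube Asub α₂ R₂ T₂ ⊆ cdCube Asub β P Q →
        cdCube Asub α (R₁ ∩ R₂) (T₁ ∪ T₂) ⊆ cdCube Asub β P Q) := by
  -- small helper: containment of one cube into C(α, P', Q') given α ∈ αᵢ A_{Rᵢ}
  have key : ∀ (γ δ : A) (R T P Q : Set S), R ⊆ T → P ⊆ R → T ⊆ Q →
      δ⁻¹ * γ ∈ Asub R →
      cdCube Asub γ R T ⊆ cdCube Asub δ P Q := by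
    intro γ δ R T P Q hRT hPR hTQ hmem v hv
    obtain ⟨hRv, hvT, hc⟩ := hv
    refine ⟨hPR.trans hRv, hvT.trans hTQ, ?_⟩
    rw [hc]
    symm
    exact (leftCoset_eq_iff _).mpr (hmono R v.1 hRv hmem)
  constructor
  · constructor
    · rintro ⟨β, P, Q, hPQ, hQ, hc1, hc2⟩
      have hv1 : (R₁, α₁ • (Asub R₁ : Set A)) ∈ cdCube Asub α₁ R₁ T₁ :=
        ⟨subset_rfl, h₁, rfl⟩
      have hv1' := hc1 hv1
      have hv2 : (R₂, α₂ • (Asub R₂ : Set A)) ∈ cdCube Asub α₂ R₂ T₂ :=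
        ⟨subset_rfl, h₂, rfl⟩
      have hv2' := hc2 hv2
      have hw1 : (T₁, α₁ • (Asub T₁ : Set A)) ∈ cdCube Asub α₁ R₁ T₁ :=
        ⟨h₁, subset_rfl, rfl⟩
      have hw2 : (T₂, α₂ • (Asub T₂ : Set A)) ∈ cdCube Asub α₂ R₂ T₂ :=
        ⟨h₂, subset_rfl, rfl⟩
      have hT1Q : T₁ ⊆ Q := (hc1 hw1).2.1
      have hT2Q : T₂ ⊆ Q := (hc2 hw2).2.1
      refine ⟨⟨β, ?_, ?_⟩, hlower _ Q (Set.union_subset hT1Q hT2Q) hQ⟩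
      · have e1 : α₁ • (Asub R₁ : Set A) = β • (Asub R₁ : Set A) := hv1'.2.2
        rw [e1]; exact mem_own_leftCoset _ _
      · have e2 : α₂ • (Asub R₂ : Set A) = β • (Asub R₂ : Set A) := hv2'.2.2
        rw [e2]; exact mem_own_leftCoset _ _
    · rintro ⟨⟨α, hα1, hα2⟩, hTU⟩
      have hm1 : α₁⁻¹ * α ∈ Asub R₁ := (mem_leftCoset_iff _).mp hα1
      have hm2 : α₂⁻¹ * α ∈ Asub R₂ := (mem_leftCoset_iff _).mp hα2
      refine ⟨α, R₁ ∩ R₂, T₁ ∪ T₂,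
        (Set.inter_subset_left.trans h₁).trans Set.subset_union_left, hTU,
        key α₁ α R₁ T₁ _ _ h₁ Set.inter_subset_left Set.subset_union_left
          (by simpa using (Asub R₁).inv_mem hm1),
        key α₂ α R₂ T₂ _ _ h₂ Set.inter_subset_right Set.subset_union_right
          (by simpa using (Asub R₂).inv_mem hm2)⟩
  · rintro α ⟨hα1, hα2⟩ hTU
    have hm1 : α₁⁻¹ * α ∈ Asub R₁ := (mem_leftCoset_iff _).mp hα1
    have hm2 : α₂⁻¹ * α ∈ Asub R₂ := (mem_leftCoset_iff _).mp hα2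
    have hm1' : α⁻¹ * α₁ ∈ Asub R₁ := by simpa using (Asub R₁).inv_mem hm1
    have hm2' : α⁻¹ * α₂ ∈ Asub R₂ := by simpa using (Asub R₂).inv_mem hm2
    refine ⟨key α₁ α R₁ T₁ _ _ h₁ Set.inter_subset_left Set.subset_union_left hm1',
      key α₂ α R₂ T₂ _ _ h₂ Set.inter_subset_right Set.subset_union_right hm2', ?_⟩
    intro β P Q hPQ hQ hc1 hc2
    have hv1' := hc1 (show (R₁, α₁ • (Asub R₁ : Set A)) ∈ _ from ⟨subset_rfl, h₁, rfl⟩)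
    have hv2' := hc2 (show (R₂, α₂ • (Asub R₂ : Set A)) ∈ _ from ⟨subset_rfl, h₂, rfl⟩)
    have hT1Q : T₁ ⊆ Q := (hc1 (show (T₁, α₁ • (Asub T₁ : Set A)) ∈ _ from ⟨h₁, subset_rfl, rfl⟩)).2.1
    have hT2Q : T₂ ⊆ Q := (hc2 (show (T₂, α₂ • (Asub T₂ : Set A)) ∈ _ from ⟨h₂, subset_rfl, rfl⟩)).2.1
    have e1 : α₁ • (Asub R₁ : Set A) = β • (Asub R₁ : Set A) := hv1'.2.2
    have e2 : α₂ • (Asub R₂ : Set A) = β • (Asub R₂ : Set A) := hv2'.2.2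
    have hb1 : β⁻¹ * α₁ ∈ Asub R₁ := (leftCoset_eq_iff _).mp e1.symm
    have hb2 : β⁻¹ * α₂ ∈ Asub R₂ := (leftCoset_eq_iff _).mp e2.symm
    have hba1 : β⁻¹ * α ∈ Asub R₁ := by
      have := (Asub R₁).mul_mem hb1 hm1
      simpa [mul_assoc] using this
    have hba2 : β⁻¹ * α ∈ Asub R₂ := by
      have := (Asub R₂).mul_mem hb2 hm2
      simpa [mul_assoc] using this
    have hba : β⁻¹ * α ∈ Asub (R₁ ∩ R₂) := by
      rw [← hinter]; exact ⟨hba1, hba2⟩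
    exact key α β (R₁ ∩ R₂) (T₁ ∪ T₂) P Q
      ((Set.inter_subset_left.trans h₁).trans Set.subset_union_left)
      (Set.subset_inter (hv1'.1) (hv2'.1))
      (Set.union_subset hT1Q hT2Q) hba
end

section
/- In the Coxeter graph Γ_{VB,n} with vertex set S = {x_{i,j} : 1 ≤ i ≠ j ≤ n}, the maximum cardinality of a subset X ⊆ S such that W_X is finite equals n − 1. (Here W_X is finite iff the underlying graph of Γ_X, whose edges are the pairs {x_{i,j}, x_{j,k}}, contains no cycle and no ∞-labeled edge, i.e., Γ_X is a disjoint union of type-A paths.) -/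
/-- The vertex set `S = {x_{i,j} : 1 ≤ i ≠ j ≤ n}` of the Coxeter graph
`Γ_{VB,n}` of the virtual braid kernel `K_n`. -/
def VBVertex (n : ℕ) : Type := {p : Fin n × Fin n // p.1 ≠ p.2}

/-- Ordinary (label-3) edges of `Γ_{VB,n}`: `x_{i,j}` and `x_{j,k}` are joined
by an edge labeled 3 for `i, j, k` distinct. -/
def vbOrdEdge {n : ℕ} (p q : VBVertex n) : Prop :=
  (p.1.2 = q.1.1 ∧ p.1.1 ≠ q.1.2) ∨ (q.1.2 = p.1.1 ∧ q.1.1 ≠ p.1.2)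

/-- The `∞`-labeled edges of `Γ_{VB,n}`. -/
def vbInfEdge {n : ℕ} (p q : VBVertex n) : Prop :=
  p ≠ q ∧ (p.1.1 = q.1.1 ∨ p.1.2 = q.1.2 ∨ (p.1.2 = q.1.1 ∧ p.1.1 = q.1.2))

/-- The underlying simple graph of the ordinary edges of `Γ_{VB,n}`. -/
def vbGraph (n : ℕ) : SimpleGraph (VBVertex n) where
  Adj p q := vbOrdEdge p q
  symm := by
    constructor
    intro p q h
    unfold vbOrdEdge at *
    tauto
  loopless := by
    constructor
    intro p h
    rcases h with ⟨h₁, h₂⟩ | ⟨h₁, h₂⟩ <;> exact h₂ h₁.symm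

/-- `W_X` is finite iff `Γ_X` has no `∞`-labeled edge and the underlying graph
of `Γ_X` contains no cycle, i.e. `Γ_X` is a disjoint union of type-`A` paths. -/
def vbSpherical {n : ℕ} (X : Set (VBVertex n)) : Prop :=
  (∀ p ∈ X, ∀ q ∈ X, ¬ vbInfEdge p q) ∧ ((vbGraph n).induce X).IsAcyclic

/-!
An `∞`-free set `X` has pairwise distinct first indices and pairwise distinct second
indices, so `|X| ≤ n`. If `|X| = n`, both index maps are bijections onto `Fin n`, so every
`x_{i,j} ∈ X` has a unique successor `x_{j,k} ∈ X`; `k ≠ i` because `x_{i,j}, x_{j,i}` span an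
`∞`-edge, so a vertex is joined to its successor and is not the successor of its successor.
Such an injective successor map on a finite graph forces a cycle. Conversely, on
`x_{1,2}, …, x_{n-1,n}` the first index embeds `Γ_X` into the path graph.
-/

namespace SimpleGraph

variable {V : Type*} {G : SimpleGraph V}

theorem pathGraph_isAcyclic (n : ℕ) : (pathGraph n).IsAcyclic := by
  refine isAcyclic_iff_forall_adj_isBridge.2 fun u v huv => ?_
  wlog h : u.val + 1 = v.val generalizing u v
  · rw [Sym2.eq_swap]
    exact this v u huv.symm ((pathGraph_adj.1 huv).resolve_left h)
  rw [isBridge_iff]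
  rintro ⟨w⟩
  obtain ⟨d, -, hd, hd'⟩ := w.exists_boundary_dart {x | x ≤ u} (le_refl u) (by simp; omega)
  obtain ⟨hadj, hne⟩ := deleteEdges_adj.1 d.adj
  have hfst : d.fst.val ≤ u.val := hd
  have hsnd : u.val < d.snd.val := not_le.1 hd'
  rcases pathGraph_adj.1 hadj with h' | h'
  · have hu : d.fst = u := Fin.ext (by omega)
    have hv : d.snd = v := Fin.ext (by omega)
    exact hne (by rw [hu, hv]; rfl)
  · omega

theorem not_isAcyclic_of_injective [Finite V] [Nonempty V] {f : V → V}
    (hf : Function.Injective f) (hadj : ∀ v, G.Adj v (f v)) (hf₂ : ∀ v, f (f v) ≠ v) :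
    ¬ G.IsAcyclic := by
  intro hG
  obtain ⟨v₀⟩ := ‹Nonempty V›
  have hbridge := isBridge_iff.1 (isAcyclic_iff_forall_adj_isBridge.1 hG (hadj v₀))
  -- `R` is `f`-invariant, hence permuted by `f`, so it contains the preimage `v₀` of `f v₀ ∈ R`.
  set R := {w | (G.deleteEdges {s(v₀, f v₀)}).Reachable (f v₀) w}
  have hv₀ : v₀ ∉ R := fun h => hbridge h.symm
  have hmaps : Set.MapsTo f R R := by
    intro w hw
    refine hw.trans (deleteEdges_adj.2 ⟨hadj w, ?_⟩).reachable
    rw [Set.mem_singleton_iff, Sym2.eq_iff]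
    rintro (⟨rfl, -⟩ | ⟨rfl, h⟩)
    · exact hv₀ hw
    · exact hf₂ v₀ h
  obtain ⟨w, hw, hfw⟩ := ((Set.toFinite R).injOn_iff_bijOn_of_mapsTo hmaps).1 hf.injOn
    |>.surjOn (Reachable.refl (f v₀))
  exact hv₀ (hf hfw ▸ hw)

end SimpleGraph

open SimpleGraph

section

variable {n : ℕ} {X : Set (VBVertex n)}

theorem injective_fst_of_not_vbInfEdge (hX : ∀ p ∈ X, ∀ q ∈ X, ¬ vbInfEdge p q) :
    Function.Injective fun p : X => p.1.1.1 :=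
  fun p q h => by_contra fun hne => hX p p.2 q q.2 ⟨fun e => hne (Subtype.ext e), Or.inl h⟩

theorem injective_snd_of_not_vbInfEdge (hX : ∀ p ∈ X, ∀ q ∈ X, ¬ vbInfEdge p q) :
    Function.Injective fun p : X => p.1.1.2 :=
  fun p q h => by_contra fun hne =>
    hX p p.2 q q.2 ⟨fun e => hne (Subtype.ext e), Or.inr (Or.inl h)⟩

theorem fst_ne_snd_of_not_vbInfEdge (hX : ∀ p ∈ X, ∀ q ∈ X, ¬ vbInfEdge p q)
    {p q : VBVertex n} (hp : p ∈ X) (hq : q ∈ X) (h : p.1.2 = q.1.1) : p.1.1 ≠ q.1.2 := by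
  refine fun h' => hX p hp q hq ⟨?_, Or.inr (Or.inr ⟨h, h'⟩)⟩
  rintro rfl
  exact p.2 h'

theorem vbSpherical.ncard_le (hX : vbSpherical X) : X.ncard ≤ n - 1 := by
  have hfst := injective_fst_of_not_vbInfEdge hX.1
  have hle : Nat.card X ≤ n := by simpa using Nat.card_le_card_of_injective _ hfst
  rw [← Nat.card_coe_set_eq]
  by_contra hlt
  have hcard : Nat.card (Fin n) ≤ Nat.card X := by rw [Nat.card_fin]; omega
  have : Nonempty X := (Nat.card_pos_iff.1 (by omega)).1
  have : Finite X := Finite.of_injective _ hfst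
  let e₁ := Equiv.ofBijective _ (hfst.bijective_of_nat_card_le hcard)
  let e₂ := Equiv.ofBijective _
    ((injective_snd_of_not_vbInfEdge hX.1).bijective_of_nat_card_le hcard)
  let succ : X → X := fun p => e₁.symm (e₂ p)
  have hsucc : ∀ p, (succ p).1.1.1 = p.1.1.2 := fun p => e₁.apply_symm_apply _
  have hne : ∀ p, p.1.1.1 ≠ (succ p).1.1.2 := fun p =>
    fst_ne_snd_of_not_vbInfEdge hX.1 p.2 (succ p).2 (hsucc p).symm
  refine not_isAcyclic_of_injective (f := succ) (e₁.symm.injective.comp e₂.injective)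
    (fun p => Or.inl ⟨(hsucc p).symm, hne p⟩) (fun p h => hne p ?_) hX.2
  rw [← hsucc (succ p), h]

theorem vbSpherical_of_forall_snd_eq_fst_add_one (hX : ∀ p ∈ X, (p.1.2 : ℕ) = p.1.1 + 1) :
    vbSpherical X := by
  have hinf : ∀ p ∈ X, ∀ q ∈ X, ¬ vbInfEdge p q := by
    rintro p hp q hq ⟨hne, h⟩
    have hp' := hX p hp
    have hq' := hX q hq
    simp only [Fin.ext_iff] at h
    exact hne (Subtype.ext (Prod.ext (Fin.ext (by omega)) (Fin.ext (by omega))))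
  refine ⟨hinf, IsAcyclic.comap ⟨fun p => p.1.1.1, fun {p q} h => ?_⟩
    (injective_fst_of_not_vbInfEdge hinf) (pathGraph_isAcyclic n)⟩
  have hp' := hX p p.2
  have hq' := hX q q.2
  change vbOrdEdge p.1 q.1 at h
  rcases h with ⟨h, -⟩ | ⟨h, -⟩ <;> rw [Fin.ext_iff] at h <;> exact pathGraph_adj.2 (by omega)

end

def vbPathVert (n : ℕ) (i : Fin (n - 1)) : VBVertex n :=
  ⟨(⟨i, by omega⟩, ⟨i + 1, by omega⟩), fun h => by simpa using congrArg Fin.val h⟩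

theorem vbPathVert_injective (n : ℕ) : Function.Injective (vbPathVert n) :=
  fun i j h => Fin.ext <| by
    simpa [vbPathVert] using congrArg (fun p : VBVertex n => p.1.1.val) h

/-- The maximum cardinality of a subset `X ⊆ S` of `Γ_{VB,n}` with `W_X` finite
is `n - 1`. -/
theorem vb_spherical_max_card (n : ℕ) :
    IsGreatest {k : ℕ | ∃ X : Set (VBVertex n), vbSpherical X ∧ X.ncard = k}
      (n - 1) := by
  refine ⟨⟨Set.range (vbPathVert n), vbSpherical_of_forall_snd_eq_fst_add_one ?_, ?_⟩, ?_⟩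
  · rintro _ ⟨i, rfl⟩
    rfl
  · rw [Set.ncard_range_of_injective (vbPathVert_injective n), Nat.card_fin]
  · rintro k ⟨X, hX, rfl⟩
    exact hX.ncard_le
end
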